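/- arXiv:1602.07445 — 2 statements merged into one kernel-verified Lean document; each statement's English description precedes it below -/
import Mathlib

section
/- Let I : ℂ × ℂ → ℂ be analytic on a neighborhood of (0,0) with I(x, I(x,y)) = y for all (x,y) near (0,0) and ∂I/∂y(0,0) = −1. Define h(x,y) := x + (y − I(x,y))/2. Then: (i) h is analytic near (0,0) and h(x, I(x,y)) = 2x − h(x,y) for all (x,y) near (0,0), i.e., for each fixed x the map h(x,·) conjugates the involution I(x,·) to the model involution y ↦ 2x − y; (ii) the map H(x,y) = (x, h(x,y)) is a local biholomorphism at (0,0); (iii) if ℓ is analytic near 0 with I(x, ℓ(x)) = ℓ(x) for all x near 0, then h(x, ℓ(x)) = x, so H sends the fixed-point curve of the family of involutions I(x,·) to the fixed-point curve {y = x} of the model involutions. -/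
/-!
The conjugation identity and the behaviour on the fixed-point curve are pure algebra:
`h (x, I (x,y)) = x + (I (x,y) - y)/2 = 2x - h (x,y)` because `I (x, ·)` is an involution, and
`h (x, ℓ x) = x` because `ℓ x` is fixed. For the local biholomorphism,
`∂h/∂y (0,0) = (1 + 1)/2 = 1`, so the derivative of `H (x,y) = (x, h (x,y))` at the origin is
the shear `(x,y) ↦ (x, y + c x)`, which is invertible; the analytic inverse function theorem
then applies.
-/

open Filter Topology ContinuousLinearMap

section LocalInverse

variable {𝕜 : Type*} [NontriviallyNormedField 𝕜]
  {E : Type*} [NormedAddCommGroup E] [NormedSpace 𝕜 E] [CompleteSpace E]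
  {F : Type*} [NormedAddCommGroup F] [NormedSpace 𝕜 F]
  {f : E → F} {f' : E ≃L[𝕜] F} {a : E}

theorem HasStrictFDerivAt.analyticAt_localInverse (hf : HasStrictFDerivAt f (f' : E →L[𝕜] F) a)
    (ha : AnalyticAt 𝕜 f a) : AnalyticAt 𝕜 (hf.localInverse f f' a) (f a) := by
  have hcoe : (hf.toOpenPartialHomeomorph f : E → F) = f := hf.toOpenPartialHomeomorph_coe
  rw [hf.localInverse_def]
  simpa only [hcoe] using (hf.toOpenPartialHomeomorph f).analyticAt_symm'
    hf.mem_toOpenPartialHomeomorph_source (by rwa [hcoe])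
    (by rw [hcoe]; exact hf.hasFDerivAt.fderiv)

theorem AnalyticAt.exists_localInverse (ha : AnalyticAt 𝕜 f a)
    (hf : HasStrictFDerivAt f (f' : E →L[𝕜] F) a) :
    ∃ g : F → E, AnalyticAt 𝕜 g (f a) ∧ (∀ᶠ x in 𝓝 a, g (f x) = x) ∧
      ∀ᶠ y in 𝓝 (f a), f (g y) = y :=
  ⟨_, hf.analyticAt_localInverse ha, hf.eventually_left_inverse, hf.eventually_right_inverse⟩

end LocalInverse

section Shear

variable {𝕜 : Type*} [NontriviallyNormedField 𝕜]
  {E : Type*} [NormedAddCommGroup E] [NormedSpace 𝕜 E]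
  {F : Type*} [NormedAddCommGroup F] [NormedSpace 𝕜 F]

theorem DifferentiableAt.fderiv_apply_zero_one {f : E × 𝕜 → F} {x : E} {y : 𝕜}
    (hf : DifferentiableAt 𝕜 f (x, y)) :
    fderiv 𝕜 f (x, y) (0, 1) = deriv (fun t => f (x, t)) y :=
  (hf.hasFDerivAt.comp_hasDerivAt y ((hasDerivAt_const y x).prodMk (hasDerivAt_id y))).deriv.symm

theorem HasStrictFDerivAt.fst_prodMk_skewProd {f : E × F → F} {L : E × F →L[𝕜] F}
    {p : E × F} (hf : HasStrictFDerivAt f L p)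
    (hL : L ∘L inr 𝕜 E F = ContinuousLinearMap.id 𝕜 F) :
    HasStrictFDerivAt (fun q => (q.1, f q))
      ((ContinuousLinearEquiv.refl 𝕜 E).skewProd (.refl 𝕜 F) (L ∘L inl 𝕜 E F) :
        E × F →L[𝕜] E × F) p := by
  refine (hasStrictFDerivAt_fst.prodMk hf).congr_fderiv (ContinuousLinearMap.ext fun q => ?_)
  have hLq : L q = L (q.1, 0) + q.2 := by
    have hL₂ : L (0, q.2) = q.2 := DFunLike.congr_fun hL q.2
    rw [← hL₂, ← map_add, Prod.mk_add_mk, add_zero, zero_add]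
  simp [hLq, add_comm]

end Shear

/-- Linearization of an analytic family of involutions `I (x, ·)` with `∂I/∂y (0,0) = -1`:
the map `h (x,y) = x + (y - I (x,y))/2` conjugates each `I (x, ·)` to `y ↦ 2x - y`,
`H (x,y) = (x, h (x,y))` is a local biholomorphism at `(0,0)`, and `H` sends the
fixed-point curve of the family to the diagonal `{y = x}`. -/
theorem family_involution_linearization (I : ℂ × ℂ → ℂ)
    (hI : AnalyticAt ℂ I (0, 0))
    (hinv : ∀ᶠ p : ℂ × ℂ in 𝓝 (0, 0), I (p.1, I p) = p.2)
    (hd : deriv (fun y : ℂ => I (0, y)) 0 = -1)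
    (h : ℂ × ℂ → ℂ) (hh : ∀ p : ℂ × ℂ, h p = p.1 + (p.2 - I p) / 2)
    (H : ℂ × ℂ → ℂ × ℂ) (hH : ∀ p : ℂ × ℂ, H p = (p.1, h p)) :
    -- (i) `h` is analytic and conjugates `I (x, ·)` to the model involution `y ↦ 2x - y`
    (AnalyticAt ℂ h (0, 0) ∧
      ∀ᶠ p : ℂ × ℂ in 𝓝 (0, 0), h (p.1, I p) = 2 * p.1 - h p) ∧
    -- (ii) `H` is a local biholomorphism at `(0,0)`
    (∃ G : ℂ × ℂ → ℂ × ℂ, AnalyticAt ℂ G (H (0, 0)) ∧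
      (∀ᶠ p : ℂ × ℂ in 𝓝 (0, 0), G (H p) = p) ∧
      (∀ᶠ q : ℂ × ℂ in 𝓝 (H (0, 0)), H (G q) = q)) ∧
    -- (iii) the fixed-point curve is sent to `{y = x}`
    (∀ ℓ : ℂ → ℂ, AnalyticAt ℂ ℓ 0 →
      (∀ᶠ x in 𝓝 (0 : ℂ), I (x, ℓ x) = ℓ x) →
      ∀ᶠ x in 𝓝 (0 : ℂ), h (x, ℓ x) = x) := by
  have hha : AnalyticAt ℂ h (0, 0) := by
    rw [funext hh]
    exact analyticAt_fst.add ((analyticAt_snd.sub hI).div_const)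
  have hI_partial_y : HasDerivAt (fun y : ℂ => I (0, y)) (-1) 0 :=
    hd ▸ (hI.differentiableAt.comp (0 : ℂ) (by fun_prop)).hasDerivAt
  have hh_partial_y :
      fderiv ℂ h (0, 0) ∘L inr ℂ ℂ ℂ = ContinuousLinearMap.id ℂ ℂ := by
    ext
    rw [coe_comp, Function.comp_apply, inr_apply, ContinuousLinearMap.id_apply,
      hha.differentiableAt.fderiv_apply_zero_one]
    simp only [hh]
    exact (((hasDerivAt_id (0 : ℂ)).sub hI_partial_y).div_const 2).const_add 0
      |>.deriv.trans (by norm_num)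
  refine ⟨⟨hha, ?_⟩, ?_, fun ℓ _ hfix => ?_⟩
  · filter_upwards [hinv] with p hp
    rw [hh, hh, hp]
    ring
  · rw [funext hH]
    exact (analyticAt_fst.prod hha).exists_localInverse
      (hha.hasStrictFDerivAt.fst_prodMk_skewProd hh_partial_y)
  · filter_upwards [hfix] with x hx
    rw [hh, hx]
    ring
end

section
/- Let a, t ∈ ℂ. Define P(x,y) := −y², Q(x,y) := 2x(y − x), and the pull-back coefficients under the map L(x,y) = (x, (a + tx)·y): P_t(x,y) := 2txy·((a+tx)y − x) − y²·(a+tx)² and Q_t(x,y) := 2x(a+tx)·((a+tx)y − x) (these are the dx- and dy-coefficients of the pull-back by L of the 1-form P dx + Q dy). Then the tangency function T := P·Q_t − Q·P_t factors as T(x,y) = y·G(x,y) for a polynomial G satisfying G(x,0) = −4t·x⁴ for all x ∈ ℂ. In particular, if t ≠ 0, the restriction of G to {y = 0} vanishes to order exactly 4 at x = 0. -/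
/-!
Both `P = -y²` and the pull-back coefficient `P_t` are divisible by `y`
(the curve `{y = 0}` is invariant for both foliations), so `y` divides `T = P Q_t - Q P_t`
already as a polynomial identity. On `{y = 0}` only the term coming from `Q · P_t` survives:
there `Q = -2x²`, and `P_t / y` restricts to `-2t x²` since the `y²`-term dies, whence
`G(x, 0) = -4t x⁴`.
-/

namespace PerturbedTangency

open MvPolynomial

variable {R : Type*} [CommRing R] (a t : R)

/-- The factor `a + t x` of the perturbed gluing map `(x, y) ↦ (x, (a + t x) y)`. -/
noncomputable def multiplier : MvPolynomial (Fin 2) R := C a + C t * X 0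

noncomputable def formP : MvPolynomial (Fin 2) R := -X 1 ^ 2

noncomputable def formQ : MvPolynomial (Fin 2) R := 2 * X 0 * (X 1 - X 0)

noncomputable def pullbackP : MvPolynomial (Fin 2) R :=
  2 * C t * X 0 * X 1 * (multiplier a t * X 1 - X 0) - X 1 ^ 2 * multiplier a t ^ 2

noncomputable def pullbackQ : MvPolynomial (Fin 2) R :=
  2 * X 0 * multiplier a t * (multiplier a t * X 1 - X 0)

noncomputable def tangency : MvPolynomial (Fin 2) R :=
  formP * pullbackQ a t - formQ * pullbackP a t

noncomputable def tangencyQuotient : MvPolynomial (Fin 2) R :=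
  -X 1 * pullbackQ a t -
    formQ * (2 * C t * X 0 * (multiplier a t * X 1 - X 0) - X 1 * multiplier a t ^ 2)

theorem tangency_eq_X_mul_tangencyQuotient :
    tangency a t = X 1 * tangencyQuotient a t := by
  unfold tangency tangencyQuotient formP pullbackP pullbackQ
  ring

theorem eval_tangency (x y : R) :
    eval ![x, y] (tangency a t) =
      -y ^ 2 * (2 * x * (a + t * x) * ((a + t * x) * y - x)) -
        2 * x * (y - x) * (2 * t * x * y * ((a + t * x) * y - x) - y ^ 2 * (a + t * x) ^ 2) := by
  simp [tangency, formP, formQ, pullbackP, pullbackQ, multiplier]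

theorem eval_tangencyQuotient_y_zero (x : R) :
    eval ![x, 0] (tangencyQuotient a t) = -4 * t * x ^ 4 := by
  simp only [tangencyQuotient, formQ, multiplier, map_sub, map_mul, map_neg, map_add, map_pow,
    map_ofNat, eval_X, eval_C, Matrix.cons_val_zero, Matrix.cons_val_one]
  ring

end PerturbedTangency

open PerturbedTangency in
/-- Tangency between the 1-form `2x(y-x) dy - y² dx` and its pull-back by the perturbed
gluing map `L (x,y) = (x, (a + tx) y)`: the tangency function `T = P Q_t - Q P_t`
factors as `T = y G` for a polynomial `G` with `G (x, 0) = -4 t x⁴`; in particular,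
if `t ≠ 0`, the restriction of `G` to `{y = 0}` vanishes to order exactly `4` at `0`. -/
theorem perturbed_tangency_order_four (a t : ℂ)
    (P Q Pt Qt T : ℂ → ℂ → ℂ)
    (hP : ∀ x y : ℂ, P x y = -y ^ 2)
    (hQ : ∀ x y : ℂ, Q x y = 2 * x * (y - x))
    (hPt : ∀ x y : ℂ, Pt x y =
      2 * t * x * y * ((a + t * x) * y - x) - y ^ 2 * (a + t * x) ^ 2)
    (hQt : ∀ x y : ℂ, Qt x y = 2 * x * (a + t * x) * ((a + t * x) * y - x))
    (hT : ∀ x y : ℂ, T x y = P x y * Qt x y - Q x y * Pt x y) :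
    ∃ G : MvPolynomial (Fin 2) ℂ,
      (∀ x y : ℂ, T x y = y * MvPolynomial.eval ![x, y] G) ∧
      (∀ x : ℂ, MvPolynomial.eval ![x, 0] G = -4 * t * x ^ 4) ∧
      (t ≠ 0 →
        (∀ k < 4, iteratedDeriv k (fun x : ℂ => MvPolynomial.eval ![x, 0] G) 0 = 0) ∧
        iteratedDeriv 4 (fun x : ℂ => MvPolynomial.eval ![x, 0] G) 0 ≠ 0) := by
  have h_restrict : (fun x : ℂ => MvPolynomial.eval ![x, 0] (tangencyQuotient a t)) =
      fun x => -4 * t * x ^ 4 :=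
    funext (eval_tangencyQuotient_y_zero a t)
  refine ⟨tangencyQuotient a t, fun x y => ?_, eval_tangencyQuotient_y_zero a t, fun ht => ?_⟩
  · have h_eval := congrArg (MvPolynomial.eval ![x, y]) (tangency_eq_X_mul_tangencyQuotient a t)
    rw [eval_tangency, MvPolynomial.eval_mul, MvPolynomial.eval_X] at h_eval
    simpa [hT, hP, hQ, hPt, hQt] using h_eval
  · simp only [h_restrict, iteratedDeriv_const_mul_field, iteratedDeriv_fun_pow_zero]
    refine ⟨fun k hk => by simp [hk.ne], by simp [ht, Nat.factorial]⟩
end
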